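/- Let λ₁,…,λ_s be linearly independent dominant weights of G and let Γ = ℕλ₁+…+ℕλ_s. Then Γ is saturated (i.e. ℤΓ ∩ Λ⁺ = Γ) if and only if for every i ∈ {1,…,s} there exists a simple root α such that (λ_i, α) ≠ 0 and (λ_j, α) = 0 for all j ≠ i. -/

import Mathlib

noncomputable section

/-- Combinatorial data attached to a connected, simply connected complex semisimple
algebraic group `G` with maximal torus `T` contained in a Borel subgroup `B`: the
weight lattice `Λ` of `T`, a Weyl-invariant scalar product `pairing` on it, the simple
roots `simpleRoot i` (`i : ι`), and the coroot pairings `coroot x i = ⟨x, (α_i)^∨⟩`,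
which identify `Λ` with `ℤ^ι` since `G` is simply connected.  A weight `x` is dominant
(`x ∈ Λ⁺`) iff `0 ≤ coroot x i` for all `i`. -/
structure RootWeightData where
  /-- the index set of the simple roots -/
  ι : Type
  [fintype_ι : Fintype ι]
  /-- the weight lattice `Λ` -/
  Λ : Type
  [addCommGroup_Λ : AddCommGroup Λ]
  /-- a Weyl-invariant scalar product on `Λ ⊗ ℚ`, restricted to `Λ` -/
  pairing : Λ → Λ → ℚ
  pairing_symm : ∀ x y, pairing x y = pairing y x
  pairing_add_left : ∀ x y z, pairing (x + y) z = pairing x z + pairing y z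
  /-- the simple roots `α_i` -/
  simpleRoot : ι → Λ
  simpleRoot_injective : Function.Injective simpleRoot
  pairing_simpleRoot_pos : ∀ i, 0 < pairing (simpleRoot i) (simpleRoot i)
  /-- the coroot pairings `x ↦ ⟨x, (α_i)^∨⟩`; since `G` is simply connected they
  identify `Λ` with `ℤ^ι` -/
  coroot : Λ →+ (ι → ℤ)
  coroot_bijective : Function.Bijective coroot
  coroot_eq : ∀ x i, (coroot x i : ℚ) * pairing (simpleRoot i) (simpleRoot i)
      = 2 * pairing x (simpleRoot i)

attribute [instance] RootWeightData.fintype_ι RootWeightData.addCommGroup_Λ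

/-- A weight is dominant iff its pairing with every simple coroot is nonnegative. -/
def RootWeightData.IsDominant (D : RootWeightData) (x : D.Λ) : Prop :=
  ∀ i, 0 ≤ D.coroot x i

/-- Let `λ_1, …, λ_s` be linearly independent dominant weights and let
`Γ = ℕλ_1 + … + ℕλ_s`.  Then `Γ` is saturated, i.e. `ℤΓ ∩ Λ⁺ = Γ`, if and only if for
every `i ∈ {1, …, s}` there is a simple root `α` with `(λ_i, α) ≠ 0` and `(λ_j, α) = 0`
for all `j ≠ i`. -/
theorem saturated_iff_simple_root_separates (D : RootWeightData)
    (s : ℕ) (lam : Fin s → D.Λ)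
    (hdom : ∀ k, D.IsDominant (lam k))
    (hind : LinearIndependent ℤ lam) :
    {x : D.Λ | x ∈ AddSubgroup.closure (Set.range lam) ∧ D.IsDominant x}
        = (AddSubmonoid.closure (Set.range lam) : Set D.Λ) ↔
      ∀ k : Fin s, ∃ i : D.ι, D.pairing (lam k) (D.simpleRoot i) ≠ 0 ∧
        ∀ l : Fin s, l ≠ k → D.pairing (lam l) (D.simpleRoot i) = 0 := by
  classical
  set c : Fin s → D.ι → ℤ := fun k => D.coroot (lam k) with hc
  -- pairing with simple root vanishes iff coroot pairing vanishes
  have hpz : ∀ (x : D.Λ) i, D.pairing x (D.simpleRoot i) = 0 ↔ D.coroot x i = 0 := by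
    intro x i
    have h := D.coroot_eq x i
    have hp := D.pairing_simpleRoot_pos i
    constructor
    · intro h0
      rw [h0, mul_zero] at h
      have := mul_eq_zero.mp h
      rcases this with h1 | h1
      · exact_mod_cast h1
      · exact absurd h1 (ne_of_gt hp)
    · intro h0
      rw [h0] at h
      push_cast at h
      rw [zero_mul] at h
      have := h.symm
      rcases mul_eq_zero.mp this with h1 | h1
      · norm_num at h1
      · exact h1
  -- membership in the group closure
  have hmemG : ∀ x : D.Λ, x ∈ AddSubgroup.closure (Set.range lam) ↔
      ∃ n : Fin s → ℤ, ∑ k, n k • lam k = x := by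
    intro x
    rw [← Submodule.span_int_eq_addSubgroupClosure, Submodule.mem_toAddSubgroup,
      Submodule.mem_span_range_iff_exists_fun]
  -- membership in the monoid closure
  have hmemM : ∀ x : D.Λ, x ∈ AddSubmonoid.closure (Set.range lam) ↔
      ∃ m : Fin s → ℕ, ∑ k, m k • lam k = x := by
    intro x
    rw [← Submodule.span_nat_eq_addSubmonoidClosure, Submodule.mem_toAddSubmonoid,
      Submodule.mem_span_range_iff_exists_fun]
  -- computing coroots of linear combinations
  have hco : ∀ (a : Fin s → ℤ) (i : D.ι),
      D.coroot (∑ l, a l • lam l) i = ∑ l, a l * c l i := by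
    intro a i
    rw [map_sum]
    rw [Finset.sum_apply]
    congr 1
    ext l
    rw [map_zsmul]
    simp [hc]
  -- uniqueness of coefficients
  have huniq : ∀ a b : Fin s → ℤ, ∑ l, a l • lam l = ∑ l, b l • lam l → a = b := by
    intro a b hab
    have h0 : ∑ l, (a l - b l) • lam l = 0 := by
      simp only [sub_smul, Finset.sum_sub_distrib, hab, sub_self]
    have hz := (Fintype.linearIndependent_iff.mp hind) (fun l => a l - b l) h0
    funext l
    exact sub_eq_zero.mp (hz l)
  constructor
  · -- saturated → separating simple roots
    intro hsat k
    by_contra hne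
    push_neg at hne
    -- translate the negation via hpz
    have hne' : ∀ i, c k i ≠ 0 → ∃ l, l ≠ k ∧ c l i ≠ 0 := by
      intro i hki
      have hki' : D.pairing (lam k) (D.simpleRoot i) ≠ 0 := fun h => hki ((hpz _ i).mp h)
      obtain ⟨l, hlk, hl⟩ := hne i hki'
      exact ⟨l, hlk, fun h => hl ((hpz _ i).mpr h)⟩
    set N : ℤ := ∑ i, c k i with hN
    have hck : ∀ l i, 0 ≤ c l i := fun l i => hdom l i
    have hN0 : 0 ≤ N := Finset.sum_nonneg fun i _ => hck k i
    have hNi : ∀ i, c k i ≤ N := fun i =>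
      Finset.single_le_sum (fun j _ => hck k j) (Finset.mem_univ i)
    set a : Fin s → ℤ := fun l => if l = k then -1 else N with ha
    set x : D.Λ := ∑ l, a l • lam l with hx
    have hxdom : D.IsDominant x := by
      intro i
      rw [hx, hco]
      have hsplit : ∑ l, a l * c l i
          = -c k i + ∑ l ∈ Finset.univ.erase k, N * c l i := by
        rw [← Finset.add_sum_erase _ _ (Finset.mem_univ k)]
        simp only [ha, if_pos rfl, neg_one_mul]
        congr 1
        apply Finset.sum_congr rfl
        intro l hl
        rw [if_neg (Finset.ne_of_mem_erase hl)]
      rw [hsplit]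
      by_cases hki : c k i = 0
      · rw [hki]
        simp only [neg_zero, zero_add]
        exact Finset.sum_nonneg fun l _ => mul_nonneg hN0 (hck l i)
      · obtain ⟨l, hlk, hl⟩ := hne' i hki
        have hl1 : 1 ≤ c l i := lt_of_le_of_ne (hck l i) (Ne.symm hl)
        have hterm : N ≤ N * c l i := le_mul_of_one_le_right hN0 hl1
        have hge : N ≤ ∑ m ∈ Finset.univ.erase k, N * c m i := by
          calc N ≤ N * c l i := hterm
          _ ≤ ∑ m ∈ Finset.univ.erase k, N * c m i :=
            Finset.single_le_sum (fun m _ => mul_nonneg hN0 (hck m i))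
              (Finset.mem_erase.mpr ⟨hlk, Finset.mem_univ l⟩)
        have := hNi i
        omega
    have hxmem : x ∈ {y : D.Λ | y ∈ AddSubgroup.closure (Set.range lam) ∧ D.IsDominant y} :=
      ⟨(hmemG x).mpr ⟨a, rfl⟩, hxdom⟩
    rw [hsat] at hxmem
    obtain ⟨m, hm⟩ := (hmemM x).mp hxmem
    rw [hx] at hm
    have hm' : ∑ l, ((m l : ℤ)) • lam l = ∑ l, a l • lam l := by
      rw [← hm]
      exact Finset.sum_congr rfl fun l _ => natCast_zsmul _ _
    have := huniq _ _ hm'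
    have hk := congrFun this k
    simp only [ha, if_pos rfl] at hk
    omega
  · -- separating simple roots → saturated
    intro hsep
    ext x
    simp only [Set.mem_setOf_eq, SetLike.mem_coe]
    constructor
    · rintro ⟨hxG, hxdom⟩
      obtain ⟨n, hn⟩ := (hmemG x).mp hxG
      have hnneg : ∀ k, 0 ≤ n k := by
        intro k
        obtain ⟨i, hki, hothers⟩ := hsep k
        have hki' : c k i ≠ 0 := fun h => hki ((hpz _ i).mpr h)
        have hkpos : 0 < c k i := lt_of_le_of_ne (hdom k i) (Ne.symm hki')
        have hxi : D.coroot x i = n k * c k i := by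
          rw [← hn, hco]
          rw [← Finset.add_sum_erase _ _ (Finset.mem_univ k)]
          have : ∑ l ∈ Finset.univ.erase k, n l * c l i = 0 := by
            apply Finset.sum_eq_zero
            intro l hl
            have : c l i = 0 := (hpz _ i).mp (hothers l (Finset.ne_of_mem_erase hl))
            rw [this, mul_zero]
          rw [this, add_zero]
        have hge : 0 ≤ n k * c k i := hxi ▸ hxdom i
        nlinarith [hge, hkpos]
      refine (hmemM x).mpr ⟨fun k => (n k).toNat, ?_⟩
      rw [← hn]
      refine Finset.sum_congr rfl fun k _ => ?_
      rw [← natCast_zsmul, Int.toNat_of_nonneg (hnneg k)]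
    · intro hxM
      obtain ⟨m, hm⟩ := (hmemM x).mp hxM
      constructor
      · refine (hmemG x).mpr ⟨fun k => (m k : ℤ), ?_⟩
        rw [← hm]
        exact Finset.sum_congr rfl fun k _ => natCast_zsmul _ _
      · intro i
        have hx2 : ∑ l, ((m l : ℤ)) • lam l = x := by
          rw [← hm]
          exact Finset.sum_congr rfl fun l _ => natCast_zsmul _ _
        rw [← hx2, hco]
        exact Finset.sum_nonneg fun l _ => mul_nonneg (Int.natCast_nonneg _) (hdom l i)
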